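/- (Frank–Wolfe recursion with 1/(t+1) steps, deterministic form) Let F be convex and L-smooth on a convex set P of diameter at most √2 in the 2-norm, with minimizer η*. Suppose a sequence η_{t+1} = η_t + (1/(t+1))(x_t − η_t) with x_t ∈ P satisfies ∇F(η_t)ᵀ(x_t − η_t) ≤ ∇F(η_t)ᵀ(η* − η_t) + ε_t. Then setting ρ_t = F(η_t) − F(η*), we have for all T ≥ 1: ρ_T ≤ ρ_1/T + (1/T)∑_{t=1}^{T−1} ε_t + (L log T)/T. -/

import Mathlib

/-!
Smoothness gives the descent lemma `F b ≤ F a + ⟪∇F a, b - a⟫ + L/2 ‖b - a‖²` and convexity the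
first-order bound `⟪∇F a, b - a⟫ ≤ F b - F a`. Together with the gap condition they yield, for a
step of size `γ` and `‖x_t - η_t‖² ≤ 2`, the contraction `ρ_{t+1} ≤ (1 - γ) ρ_t + γ ε_t + L γ²`.
For `γ = 1/(t+1)` multiplying by `t + 1` turns this into the telescoping inequality
`(t+1) ρ_{t+1} - t ρ_t ≤ ε_t + L/(t+1)`, and `1/(t+1) ≤ log (t+1) - log t` bounds the harmonic
part of the sum by `log T`.
-/

open scoped InnerProductSpace NNReal
open Finset

section SmoothConvex

variable {E : Type*} [NormedAddCommGroup E] [InnerProductSpace ℝ E] [CompleteSpace E]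
  {F : E → ℝ}

theorem hasDerivAt_comp_add_smul_gradient {a v : E} {s : ℝ}
    (hF : DifferentiableAt ℝ F (a + s • v)) :
    HasDerivAt (fun s : ℝ => F (a + s • v)) ⟪gradient F (a + s • v), v⟫_ℝ s := by
  have hline : HasDerivAt (fun s : ℝ => a + s • v) v s := by
    simpa using ((hasDerivAt_id s).smul_const v).const_add a
  refine (hF.hasGradientAt.hasFDerivAt.comp_hasDerivAt s hline).congr_deriv ?_
  simp

theorem ConvexOn.inner_gradient_sub_le_sub {s : Set E} (hFconv : ConvexOn ℝ s F)
    {a b : E} (ha : a ∈ s) (hb : b ∈ s) (hF : DifferentiableAt ℝ F a) :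
    ⟪gradient F a, b - a⟫_ℝ ≤ F b - F a := by
  have hline := hFconv.comp_affineMap (AffineMap.lineMap a b : ℝ →ᵃ[ℝ] E)
  have hcomp : F ∘ AffineMap.lineMap a b = fun t : ℝ => F (a + t • (b - a)) := by
    ext t
    simp [AffineMap.lineMap_apply, add_comm]
  rw [hcomp] at hline
  have hderiv := hasDerivAt_comp_add_smul_gradient (F := F) (v := b - a) (s := 0) (by simpa)
  have := hline.le_slope_of_hasDerivAt (by simpa) (by simpa) one_pos (by simpa using hderiv)
  simpa [slope_def_field] using this

theorem le_add_inner_gradient_add_sq_of_lipschitzWith_gradient {K : ℝ≥0}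
    (hF : Differentiable ℝ F) (hK : LipschitzWith K (gradient F)) (a b : E) :
    F b ≤ F a + ⟪gradient F a, b - a⟫_ℝ + K / 2 * ‖b - a‖ ^ 2 := by
  set v := b - a
  -- the claim is `g 1 ≤ g 0`, and `g' ≤ 0` on `(0, ∞)` by the Lipschitz bound on the gradient
  set g : ℝ → ℝ := fun s => F (a + s • v) - s * ⟪gradient F a, v⟫_ℝ - K / 2 * s ^ 2 * ‖v‖ ^ 2
  have hg : ∀ s : ℝ, HasDerivAt g
      (⟪gradient F (a + s • v) - gradient F a, v⟫_ℝ - K * s * ‖v‖ ^ 2) s := by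
    intro s
    have hquad := ((hasDerivAt_pow 2 s).const_mul (K / 2 : ℝ)).mul_const (‖v‖ ^ 2)
    refine (((hasDerivAt_comp_add_smul_gradient (hF _)).sub
      ((hasDerivAt_id s).mul_const ⟪gradient F a, v⟫_ℝ)).sub hquad).congr_deriv ?_
    rw [inner_sub_left]
    simp only [Nat.cast_ofNat]
    ring
  have hg' : ∀ s ∈ interior (Set.Ici (0 : ℝ)),
      ⟪gradient F (a + s • v) - gradient F a, v⟫_ℝ - K * s * ‖v‖ ^ 2 ≤ 0 := by
    intro s hs
    rw [interior_Ici, Set.mem_Ioi] at hs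
    have hlip : ‖gradient F (a + s • v) - gradient F a‖ ≤ K * (s * ‖v‖) := by
      simpa [dist_eq_norm, norm_smul, abs_of_pos hs] using hK.dist_le_mul (a + s • v) a
    have := calc ⟪gradient F (a + s • v) - gradient F a, v⟫_ℝ
        ≤ ‖gradient F (a + s • v) - gradient F a‖ * ‖v‖ := real_inner_le_norm _ _
      _ ≤ K * (s * ‖v‖) * ‖v‖ := by gcongr
      _ = K * s * ‖v‖ ^ 2 := by ring
    linarith
  have hanti := antitoneOn_of_hasDerivWithinAt_nonpos (convex_Ici 0)
    (fun s _ => (hg s).continuousAt.continuousWithinAt) (fun s _ => (hg s).hasDerivWithinAt) hg'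
  have := hanti Set.self_mem_Ici (Set.mem_Ici.mpr zero_le_one) zero_le_one
  simp only [g, v, zero_smul, one_smul, add_zero, add_sub_cancel, zero_mul, one_mul, sub_zero,
    ne_eq, OfNat.ofNat_ne_zero, not_false_eq_true, zero_pow, mul_zero, one_pow] at this
  linarith

theorem frankWolfe_step {K : ℝ≥0} (hFconv : ConvexOn ℝ Set.univ F) (hF : Differentiable ℝ F)
    (hK : LipschitzWith K (gradient F)) {η x y : E} {γ ε : ℝ} (hγ : 0 ≤ γ)
    (hgap : ⟪gradient F η, x - η⟫_ℝ ≤ ⟪gradient F η, y - η⟫_ℝ + ε) :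
    F (η + γ • (x - η)) - F y ≤ (1 - γ) * (F η - F y) + γ * ε + K / 2 * γ ^ 2 * ‖x - η‖ ^ 2 := by
  have hdescent := le_add_inner_gradient_add_sq_of_lipschitzWith_gradient hF hK η
    (η + γ • (x - η))
  have hconv := hFconv.inner_gradient_sub_le_sub (Set.mem_univ η) (Set.mem_univ y) (hF η)
  rw [add_sub_cancel_left, real_inner_smul_right, norm_smul, mul_pow, Real.norm_eq_abs,
    sq_abs] at hdescent
  linarith [mul_le_mul_of_nonneg_left hgap hγ, mul_le_mul_of_nonneg_left hconv hγ]

theorem frankWolfe_step_mul_succ {K : ℝ≥0} (hFconv : ConvexOn ℝ Set.univ F)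
    (hF : Differentiable ℝ F) (hK : LipschitzWith K (gradient F)) {η x y : E} {ε D : ℝ} (t : ℕ)
    (hD : ‖x - η‖ ≤ D) (hgap : ⟪gradient F η, x - η⟫_ℝ ≤ ⟪gradient F η, y - η⟫_ℝ + ε) :
    (t + 1) * (F (η + (1 / (t + 1 : ℝ)) • (x - η)) - F y) - t * (F η - F y)
      ≤ ε + K * D ^ 2 / 2 * (1 / (t + 1)) := by
  have hstep := frankWolfe_step hFconv hF hK (γ := 1 / (t + 1)) (by positivity) hgap
  have hsq : ‖x - η‖ ^ 2 ≤ D ^ 2 := pow_le_pow_left₀ (norm_nonneg _) hD 2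
  calc (t + 1) * (F (η + (1 / (t + 1 : ℝ)) • (x - η)) - F y) - t * (F η - F y)
      ≤ (t + 1) * ((1 - 1 / (t + 1)) * (F η - F y) + 1 / (t + 1) * ε
        + K / 2 * (1 / (t + 1)) ^ 2 * D ^ 2) - t * (F η - F y) := by
        gcongr
        exact hstep.trans (by gcongr)
    _ = ε + K * D ^ 2 / 2 * (1 / (t + 1)) := by
        field_simp
        ring

end SmoothConvex

theorem sum_Ico_one_div_succ_le_log (T : ℕ) :
    ∑ t ∈ Ico 1 T, (1 : ℝ) / (t + 1) ≤ Real.log T := by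
  rcases Nat.eq_zero_or_pos T with rfl | hT
  · simp
  calc ∑ t ∈ Ico 1 T, (1 : ℝ) / (t + 1)
      ≤ ∑ t ∈ Ico 1 T, (Real.log ↑(t + 1) - Real.log t) := by
        refine sum_le_sum fun t ht => ?_
        have ht : (0 : ℝ) < t := by exact_mod_cast (mem_Ico.mp ht).1
        have := Real.one_sub_inv_le_log_of_pos (x := (t + 1) / t) (by positivity)
        rw [Real.log_div (by positivity) ht.ne', inv_div] at this
        push_cast
        rwa [show (1 : ℝ) / (t + 1) = 1 - t / (t + 1) by field_simp; ring]
    _ = Real.log T := by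
        rw [sum_Ico_sub (fun t : ℕ => Real.log t) hT]
        simp

theorem Convex.mem_of_add_smul_sub_recursion {E : Type*} [AddCommGroup E] [Module ℝ E]
    {P : Set E} (hP : Convex ℝ P) {η x : ℕ → E} {γ : ℕ → ℝ} {t₀ : ℕ} (hη : η t₀ ∈ P)
    (hx : ∀ t, t₀ ≤ t → x t ∈ P) (hγ : ∀ t, t₀ ≤ t → γ t ∈ Set.Icc 0 1)
    (hrec : ∀ t, t₀ ≤ t → η (t + 1) = η t + γ t • (x t - η t)) :
    ∀ t, t₀ ≤ t → η t ∈ P := by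
  intro t ht
  induction t, ht using Nat.le_induction with
  | base => exact hη
  | succ t ht ih => exact hrec t ht ▸ hP.add_smul_sub_mem ih (hx t ht) (hγ t ht)

theorem stmt9_general {E : Type*} [NormedAddCommGroup E] [InnerProductSpace ℝ E] [CompleteSpace E]
    {P : Set E} (hP : Convex ℝ P) (hdiam : ∀ a ∈ P, ∀ b ∈ P, ‖a - b‖ ≤ Real.sqrt 2)
    (F : E → ℝ) (hFconv : ConvexOn ℝ Set.univ F) (hFdiff : Differentiable ℝ F)
    (L : ℝ) (hL : 0 ≤ L) (hFsmooth : LipschitzWith (Real.toNNReal L) (gradient F))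
    {ηstar : E}
    (η x : ℕ → E) (ε : ℕ → ℝ)
    (hη1 : η 1 ∈ P) (hx : ∀ t, 1 ≤ t → x t ∈ P)
    (hrec : ∀ t, 1 ≤ t → η (t + 1) = η t + ((1 : ℝ) / (t + 1)) • (x t - η t))
    (hgap : ∀ t, 1 ≤ t →
      ⟪gradient F (η t), x t - η t⟫_ℝ ≤ ⟪gradient F (η t), ηstar - η t⟫_ℝ + ε t) :
    ∀ T : ℕ, 1 ≤ T →
      F (η T) - F ηstar ≤ (F (η 1) - F ηstar) / T
        + (1 / (T : ℝ)) * ∑ t ∈ Icc 1 (T - 1), ε t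
        + L * Real.log T / T := by
  intro T hT
  have hmem := hP.mem_of_add_smul_sub_recursion hη1 hx
    (fun t ht => ⟨by positivity, by rw [div_le_one (by positivity)]; simp⟩) hrec
  have hstep : ∀ t ∈ Ico 1 T, ((t + 1 : ℕ) : ℝ) * (F (η (t + 1)) - F ηstar)
      - t * (F (η t) - F ηstar) ≤ ε t + L * (1 / (t + 1)) := by
    intro t ht
    replace ht := (mem_Ico.mp ht).1
    have := frankWolfe_step_mul_succ hFconv hFdiff hFsmooth t
      (hdiam _ (hx t ht) _ (hmem t ht)) (hgap t ht)
    push_cast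
    rwa [← hrec t ht, Real.coe_toNNReal L hL, Real.sq_sqrt zero_le_two,
      mul_div_cancel_right₀ _ two_ne_zero] at this
  have htel := sum_le_sum hstep
  rw [sum_Ico_sub (fun t => (t : ℝ) * (F (η t) - F ηstar)) hT, sum_add_distrib, ← mul_sum] at htel
  have hlog := sum_Ico_one_div_succ_le_log T
  have hTpos : (0 : ℝ) < T := by exact_mod_cast hT
  have hbound : (T : ℝ) * (F (η T) - F ηstar)
      ≤ F (η 1) - F ηstar + ∑ t ∈ Ico 1 T, ε t + L * Real.log T := by
    push_cast at htel
    linarith [mul_le_mul_of_nonneg_left hlog hL]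
  rw [Icc_sub_one_right_eq_Ico_of_not_isMin (by simpa using (by omega : T ≠ 0))]
  calc F (η T) - F ηstar = (T : ℝ) * (F (η T) - F ηstar) / T := by field_simp
    _ ≤ (F (η 1) - F ηstar + ∑ t ∈ Ico 1 T, ε t + L * Real.log T) / T := by gcongr
    _ = _ := by ring

/-- Frank–Wolfe recursion with `1/(t+1)` steps, deterministic form: if `F` is
convex and `L`-smooth, `P` is convex with diameter at most `√2`, `η*` minimizes `F` over `P`,
and the iterates `η_{t+1} = η_t + (1/(t+1))(x_t − η_t)` with `x_t ∈ P` satisfy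
`⟪∇F(η_t), x_t − η_t⟫ ≤ ⟪∇F(η_t), η* − η_t⟫ + ε_t`, then
`F(η_T) − F(η*) ≤ (F(η_1) − F(η*))/T + (1/T)∑_{t=1}^{T−1} ε_t + L log T / T`. -/
theorem stmt9 {E : Type*} [NormedAddCommGroup E] [InnerProductSpace ℝ E] [CompleteSpace E]
    {P : Set E} (hP : Convex ℝ P) (hdiam : ∀ a ∈ P, ∀ b ∈ P, ‖a - b‖ ≤ Real.sqrt 2)
    (F : E → ℝ) (hFconv : ConvexOn ℝ Set.univ F) (hFdiff : Differentiable ℝ F)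
    (L : ℝ) (hL : 0 ≤ L) (hFsmooth : LipschitzWith (Real.toNNReal L) (gradient F))
    {ηstar : E} (hηstar : ηstar ∈ P) (hmin : ∀ y ∈ P, F ηstar ≤ F y)
    (η x : ℕ → E) (ε : ℕ → ℝ)
    (hη1 : η 1 ∈ P) (hx : ∀ t, 1 ≤ t → x t ∈ P)
    (hrec : ∀ t, 1 ≤ t → η (t + 1) = η t + ((1 : ℝ) / (t + 1)) • (x t - η t))
    (hgap : ∀ t, 1 ≤ t →
      ⟪gradient F (η t), x t - η t⟫_ℝ ≤ ⟪gradient F (η t), ηstar - η t⟫_ℝ + ε t) :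
    ∀ T : ℕ, 1 ≤ T →
      F (η T) - F ηstar ≤ (F (η 1) - F ηstar) / T
        + (1 / (T : ℝ)) * ∑ t ∈ Icc 1 (T - 1), ε t
        + L * Real.log T / T :=
  stmt9_general hP hdiam F hFconv hFdiff L hL hFsmooth η x ε hη1 hx hrec hgap
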